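/- arXiv:2205.08280 — 2 statements merged into one kernel-verified Lean document; each statement's English description precedes it below -/
import Mathlib

section
/- Fix p, q ≥ 1 and let Sr(n,p,q) be the number of nonempty sets F ⊆ {1,...,n} such that p·min F ≥ |F| and F is either a singleton or an arithmetic progression with common difference q. Then for all n ≥ 1, Sr(n+1,p,q) - Sr(n,p,q) = ⌊(1/q)(n + 1 - ⌈(n+1+q)/(pq+1)⌉)⌋ + 1. -/
/-!
A set counted by `Sr (n + 1)` but not by `Sr n` contains `n + 1`, so it is a progression
`a, a + q, …, a + k q = n + 1`. Multiplying `k + 1 ≤ p a` by `q` and substituting `q k = n + 1 - a`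
turns it into `n + 1 + q ≤ (p q + 1) a`, i.e. `a ≥ c := ⌈(n + 1 + q)/(p q + 1)⌉`, i.e.
`q k ≤ n + 1 - c`. Hence exactly the `k ≤ ⌊(n + 1 - c)/q⌋` contribute, one set each.
-/

/-- Ceiling of a / b for natural numbers. -/
def ceilDiv (a b : ℕ) : ℕ := (a + b - 1) / b

/-- F is a singleton or an arithmetic progression with common difference q. -/
def IsAP (q : ℕ) (F : Finset ℕ) : Prop :=
  F.card = 1 ∨ ∃ a m : ℕ, 2 ≤ m ∧ F = (Finset.range m).image (fun i => a + q * i)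

/-- Number of nonempty F ⊆ {1,...,n} with p·min F ≥ |F| that are singletons or
arithmetic progressions of common difference q. -/
noncomputable def Sr (n p q : ℕ) : ℕ :=
  Nat.card {F : Finset ℕ //
    F.Nonempty ∧ F ⊆ Finset.Icc 1 n ∧
    p * sInf (F : Set ℕ) ≥ F.card ∧ IsAP q F}

open Finset

lemma ceilDiv_le_iff {x b t : ℕ} (hb : 0 < b) : ceilDiv x b ≤ t ↔ x ≤ b * t := by
  rw [ceilDiv, Nat.div_le_iff_le_mul_add_pred hb]
  omega

lemma succ_le_mul_sub_iff {p q N k : ℕ} (hp : 1 ≤ p) (hq : 1 ≤ q) (hN : 1 ≤ N) :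
    k + 1 ≤ p * (N - q * k) ↔ k ≤ (N - ceilDiv (N + q) (p * q + 1)) / q := by
  set c := ceilDiv (N + q) (p * q + 1)
  have hc_le : c ≤ N := (ceilDiv_le_iff (by omega)).2 (by nlinarith [Nat.mul_le_mul hp hN])
  rw [Nat.le_div_iff_mul_le hq]
  by_cases hkN : q * k ≤ N
  · obtain ⟨a, rfl⟩ : ∃ a, N = q * k + a := ⟨N - q * k, by omega⟩
    have scaled : k + 1 ≤ p * a ↔ q * k + a + q ≤ (p * q + 1) * a := by
      rw [← Nat.mul_le_mul_left_iff hq]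
      constructor <;> intro h <;> nlinarith
    rw [Nat.add_sub_cancel_left, scaled, ← ceilDiv_le_iff (by omega), mul_comm k q]
    omega
  · rw [Nat.sub_eq_zero_of_le (by omega), mul_zero, mul_comm k q]
    omega

def arithProg (a q m : ℕ) : Finset ℕ := (range m).image (fun i => a + q * i)

section arithProg

variable {a q m k x : ℕ}

lemma mem_arithProg : x ∈ arithProg a q m ↔ ∃ i < m, a + q * i = x := by
  simp [arithProg]

lemma arithProg_one : arithProg a q 1 = {a} := by
  simp [arithProg]

lemma card_arithProg (hq : q ≠ 0) : (arithProg a q m).card = m := by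
  rw [arithProg, card_image_of_injective _ fun i j h => by simpa [hq] using h, card_range]

lemma start_mem_arithProg : a ∈ arithProg a q (k + 1) :=
  mem_arithProg.2 ⟨0, by omega, by simp⟩

lemma last_mem_arithProg : a + q * k ∈ arithProg a q (k + 1) :=
  mem_arithProg.2 ⟨k, by omega, rfl⟩

lemma start_le_of_mem_arithProg (hx : x ∈ arithProg a q m) : a ≤ x := by
  obtain ⟨i, -, rfl⟩ := mem_arithProg.1 hx
  omega

lemma le_last_of_mem_arithProg (hx : x ∈ arithProg a q (k + 1)) : x ≤ a + q * k := by
  obtain ⟨i, hi, rfl⟩ := mem_arithProg.1 hx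
  have := Nat.mul_le_mul_left q (Nat.lt_succ_iff.1 hi)
  omega

lemma sInf_arithProg : sInf (arithProg a q (k + 1) : Set ℕ) = a :=
  IsLeast.csInf_eq ⟨start_mem_arithProg, fun _ => start_le_of_mem_arithProg⟩

lemma arithProg_subset_Icc_iff {N : ℕ} :
    arithProg a q (k + 1) ⊆ Icc 1 N ↔ 1 ≤ a ∧ a + q * k ≤ N := by
  constructor
  · intro h
    exact ⟨(mem_Icc.1 (h start_mem_arithProg)).1, (mem_Icc.1 (h last_mem_arithProg)).2⟩
  · rintro ⟨ha, hN⟩ x hx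
    have := start_le_of_mem_arithProg hx
    have := le_last_of_mem_arithProg hx
    exact mem_Icc.2 ⟨by omega, by omega⟩

lemma isAP_iff {F : Finset ℕ} : IsAP q F ↔ ∃ a k, F = arithProg a q (k + 1) := by
  constructor
  · rintro (h | ⟨a, m, hm, rfl⟩)
    · obtain ⟨a, rfl⟩ := card_eq_one.1 h
      exact ⟨a, 0, arithProg_one.symm⟩
    · exact ⟨a, m - 1, by rw [Nat.sub_add_cancel (by omega)]; rfl⟩
  · rintro ⟨a, (_ | k), rfl⟩
    · exact Or.inl (by simp [arithProg_one])
    · exact Or.inr ⟨a, k + 2, by omega, rfl⟩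

end arithProg

open Classical in
noncomputable def srFinset (n p q : ℕ) : Finset (Finset ℕ) :=
  {F ∈ (Icc 1 n).powerset |
    F.Nonempty ∧ F ⊆ Icc 1 n ∧ p * sInf (F : Set ℕ) ≥ F.card ∧ IsAP q F}

section srFinset

variable {n p q : ℕ}

lemma mem_srFinset {F : Finset ℕ} : F ∈ srFinset n p q ↔
    F.Nonempty ∧ F ⊆ Icc 1 n ∧ p * sInf (F : Set ℕ) ≥ F.card ∧ IsAP q F := by
  simp only [srFinset, mem_filter, mem_powerset, and_iff_right_iff_imp]
  exact fun h => h.2.1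

lemma Sr_eq_card_srFinset : Sr n p q = (srFinset n p q).card := by
  rw [← Nat.card_eq_finsetCard]
  exact Nat.card_congr (Equiv.subtypeEquivRight fun _ => mem_srFinset.symm)

lemma filter_not_mem_srFinset_succ :
    (srFinset (n + 1) p q).filter (n + 1 ∉ ·) = srFinset n p q := by
  have hsub {F : Finset ℕ} : F ⊆ Icc 1 (n + 1) ∧ n + 1 ∉ F ↔ F ⊆ Icc 1 n := by
    constructor
    · rintro ⟨h, hn⟩ x hx
      have := mem_Icc.1 (h hx)
      have : x ≠ n + 1 := fun e => hn (e ▸ hx)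
      exact mem_Icc.2 ⟨by omega, by omega⟩
    · intro h
      exact ⟨h.trans (Icc_subset_Icc_right (by omega)), fun hn => by simpa using h hn⟩
  ext F
  simp only [mem_filter, mem_srFinset, ← hsub]
  tauto

lemma filter_mem_srFinset (hp : 1 ≤ p) (hq : 1 ≤ q) (hn : 1 ≤ n) :
    (srFinset n p q).filter (n ∈ ·) = (range ((n - ceilDiv (n + q) (p * q + 1)) / q + 1)).image
      fun k => arithProg (n - q * k) q (k + 1) := by
  ext F
  simp only [mem_filter, mem_srFinset, mem_image, mem_range, Nat.lt_succ_iff]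
  constructor
  · rintro ⟨⟨-, hsub, hcard, hAP⟩, hnF⟩
    obtain ⟨a, k, rfl⟩ := isAP_iff.1 hAP
    obtain ⟨-, hlast⟩ := arithProg_subset_Icc_iff.1 hsub
    obtain rfl : a + q * k = n := le_antisymm hlast (le_last_of_mem_arithProg hnF)
    rw [sInf_arithProg, card_arithProg (by omega)] at hcard
    exact ⟨k, (succ_le_mul_sub_iff hp hq hn).1 (by simpa using hcard), by simp⟩
  · rintro ⟨k, hk, rfl⟩
    have hcard := (succ_le_mul_sub_iff hp hq hn).2 hk
    have hqk : q * k < n := by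
      by_contra h
      rw [Nat.sub_eq_zero_of_le (by omega), mul_zero] at hcard
      omega
    refine ⟨⟨⟨_, start_mem_arithProg⟩, arithProg_subset_Icc_iff.2 ⟨by omega, by omega⟩, ?_,
      isAP_iff.2 ⟨_, _, rfl⟩⟩, ?_⟩
    · rwa [sInf_arithProg, card_arithProg (by omega)]
    · simpa [Nat.sub_add_cancel hqk.le] using @last_mem_arithProg (n - q * k) q k

lemma card_filter_mem_srFinset (hp : 1 ≤ p) (hq : 1 ≤ q) (hn : 1 ≤ n) :
    ((srFinset n p q).filter (n ∈ ·)).card = (n - ceilDiv (n + q) (p * q + 1)) / q + 1 := by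
  rw [filter_mem_srFinset hp hq hn, card_image_of_injective _ fun i j h => ?_, card_range]
  simpa [card_arithProg (a := _) (m := _) (show q ≠ 0 by omega)] using congrArg card h

end srFinset

theorem stmt_8 (p q : ℕ) (hp : 1 ≤ p) (hq : 1 ≤ q) :
    ∀ n : ℕ, 1 ≤ n →
      Sr (n + 1) p q - Sr n p q
        = (n + 1 - ceilDiv (n + 1 + q) (p * q + 1)) / q + 1 := by
  intro n _
  rw [Sr_eq_card_srFinset, Sr_eq_card_srFinset,
    ← card_filter_add_card_filter_not (s := srFinset (n + 1) p q) (n + 1 ∈ ·),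
    filter_not_mem_srFinset_succ, card_filter_mem_srFinset hp hq (by omega)]
  exact Nat.add_sub_cancel _ _
end

section
/- Fix p, q ≥ 1 and let Sr(n,p,q) be the number of nonempty sets F ⊆ {1,...,n} with p·min F ≥ |F| such that |F| = 1 or F is an arithmetic progression of common difference q. Then Sr(1,p,q) = 1 and for every N ≥ 1, Sr(N,p,q) = 1 + Σ_{n=1}^{N-1} ⌊p(n+q+1)/(pq+1)⌋. -/
open Finset

/-- The arithmetic progression starting at `a` with `m` terms, difference `q`. -/
def AP (q a m : ℕ) : Finset ℕ := (Finset.range m).image (fun i => a + q * i)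

lemma mem_AP {q a m x : ℕ} : x ∈ AP q a m ↔ ∃ i, i < m ∧ x = a + q * i := by
  constructor
  · intro h
    rw [AP, Finset.mem_image] at h
    obtain ⟨i, hi, rfl⟩ := h
    exact ⟨i, Finset.mem_range.mp hi, rfl⟩
  · rintro ⟨i, hi, rfl⟩
    rw [AP, Finset.mem_image]
    exact ⟨i, Finset.mem_range.mpr hi, rfl⟩

lemma card_AP (q : ℕ) (hq : 1 ≤ q) (a m : ℕ) : (AP q a m).card = m := by
  rw [AP, Finset.card_image_of_injective, Finset.card_range]
  intro i j h
  simp only at h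
  have : q * i = q * j := by omega
  exact Nat.eq_of_mul_eq_mul_left (by omega) this

lemma sInf_AP (q : ℕ) (hq : 1 ≤ q) (a m : ℕ) (hm : 1 ≤ m) :
    sInf (↑(AP q a m) : Set ℕ) = a := by
  have ha : a ∈ (↑(AP q a m) : Set ℕ) := by
    rw [Finset.mem_coe, mem_AP]
    exact ⟨0, by omega, by simp⟩
  refine le_antisymm (Nat.sInf_le ha) ?_
  have hmem := Nat.sInf_mem ⟨a, ha⟩
  rw [Finset.mem_coe, mem_AP] at hmem
  obtain ⟨i, _, hi⟩ := hmem
  omega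

lemma canonical (q : ℕ) (hq : 1 ≤ q) {F : Finset ℕ} (hF : F.Nonempty) (h : IsAP q F) :
    F = AP q (sInf (↑F : Set ℕ)) F.card := by
  rcases h with h1 | ⟨a, m, hm, rfl⟩
  · obtain ⟨b, rfl⟩ := Finset.card_eq_one.mp h1
    have hs : sInf (↑({b} : Finset ℕ) : Set ℕ) = b := by
      rw [Finset.coe_singleton, csInf_singleton]
    rw [hs, Finset.card_singleton]
    ext x
    rw [mem_AP]
    simp
  · show AP q a m = AP q (sInf (↑(AP q a m) : Set ℕ)) (AP q a m).card
    rw [card_AP q hq, sInf_AP q hq a m (by omega)]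

/-- The parameter set: pairs (a, m). -/
def Pset (p q n : ℕ) : Finset (ℕ × ℕ) :=
  (Finset.Icc 1 n ×ˢ Finset.Icc 1 (p * n)).filter
    (fun x => x.2 ≤ p * x.1 ∧ x.1 + q * (x.2 - 1) ≤ n)

lemma mem_Pset {p q : ℕ} (hp : 1 ≤ p) {n : ℕ} {x : ℕ × ℕ} :
    x ∈ Pset p q n ↔ 1 ≤ x.1 ∧ 1 ≤ x.2 ∧ x.2 ≤ p * x.1 ∧ x.1 + q * (x.2 - 1) ≤ n := by
  obtain ⟨a, m⟩ := x
  simp only [Pset, Finset.mem_filter, Finset.mem_product, Finset.mem_Icc]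
  constructor
  · rintro ⟨⟨⟨u1, u2⟩, u3, u4⟩, u5, u6⟩
    exact ⟨u1, u3, u5, u6⟩
  · rintro ⟨h1, h2, h3, h4⟩
    have ha : a ≤ n := le_trans (Nat.le_add_right _ _) h4
    have hm : m ≤ p * n := h3.trans (Nat.mul_le_mul_left p ha)
    exact ⟨⟨⟨h1, ha⟩, h2, hm⟩, h3, h4⟩

lemma Sr_eq_card (p q : ℕ) (hp : 1 ≤ p) (hq : 1 ≤ q) (n : ℕ) :
    Sr n p q = (Pset p q n).card := by
  rw [Sr, ← Fintype.card_coe (Pset p q n), ← Nat.card_eq_fintype_card]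
  apply Nat.card_congr
  refine ⟨fun F => ⟨(sInf (↑F.1 : Set ℕ), F.1.card), ?_⟩,
          fun x => ⟨AP q x.1.1 x.1.2, ?_⟩, ?_, ?_⟩
  · obtain ⟨F, hne, hsub, hineq, hap⟩ := F
    have hc := canonical q hq hne hap
    set a := sInf (↑F : Set ℕ) with hadef
    set m := F.card with hmdef
    have hm1 : 1 ≤ m := Finset.card_pos.mpr hne
    have haF : a ∈ F := by
      have := Nat.sInf_mem (Finset.coe_nonempty.mpr hne : (↑F : Set ℕ).Nonempty)
      rwa [Finset.mem_coe] at this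
    have ha1 : 1 ≤ a := (Finset.mem_Icc.mp (hsub haF)).1
    have hlast : a + q * (m - 1) ∈ F := by
      rw [hc, mem_AP]; exact ⟨m - 1, by omega, rfl⟩
    have hlastn : a + q * (m - 1) ≤ n := (Finset.mem_Icc.mp (hsub hlast)).2
    exact (mem_Pset hp).mpr ⟨ha1, hm1, hineq, hlastn⟩
  · obtain ⟨⟨a, m⟩, hx⟩ := x
    obtain ⟨h1, h2, h3, h4⟩ := (mem_Pset hp).mp hx
    simp only at h1 h2 h3 h4 ⊢
    refine ⟨⟨a, mem_AP.mpr ⟨0, by omega, by simp⟩⟩, ?_, ?_, ?_⟩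
    · intro x hxm
      rw [mem_AP] at hxm
      obtain ⟨i, hi, rfl⟩ := hxm
      rw [Finset.mem_Icc]
      have : q * i ≤ q * (m - 1) := Nat.mul_le_mul_left q (by omega)
      omega
    · rw [sInf_AP q hq a m h2, card_AP q hq]; exact h3
    · rcases Nat.lt_or_ge m 2 with hm | hm
      · left; rw [card_AP q hq]; omega
      · right; exact ⟨a, m, hm, rfl⟩
  · rintro ⟨F, hne, hsub, hineq, hap⟩
    apply Subtype.ext
    exact (canonical q hq hne hap).symm
  · rintro ⟨⟨a, m⟩, hx⟩
    obtain ⟨h1, h2, h3, h4⟩ := (mem_Pset hp).mp hx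
    apply Subtype.ext
    simp only [Prod.mk.injEq]
    exact ⟨sInf_AP q hq a m h2, card_AP q hq a m⟩

lemma key_arith {p q : ℕ} (hp : 1 ≤ p) (hq : 1 ≤ q) (n m : ℕ) (hm : 1 ≤ m)
    (h : m * (p * q + 1) ≤ p * (n + q + 1)) :
    q * (m - 1) ≤ n ∧ m ≤ p * (n + 1 - q * (m - 1)) := by
  obtain ⟨k, rfl⟩ : ∃ k, m = k + 1 := ⟨m - 1, by omega⟩
  simp only [Nat.add_sub_cancel]
  have h1 : (k + 1) * (p * q + 1) = p * (q * k) + p * q + k + 1 := by ring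
  have h2 : p * (n + q + 1) = p * n + p * q + p := by ring
  rw [h1, h2] at h
  have h3 : p * (q * k) + k + 1 ≤ p * n + p := by linarith
  have h4 : q * k ≤ n := by
    by_contra hc
    push_neg at hc
    have h5 : p * (n + 1) ≤ p * (q * k) := Nat.mul_le_mul_left p hc
    have h6 : p * (n + 1) = p * n + p := by ring
    linarith
  refine ⟨h4, ?_⟩
  have e1 : p * (n + 1 - q * k) + p * (q * k) = p * n + p := by
    rw [← Nat.mul_add, Nat.sub_add_cancel (by omega)]; ring
  linarith

lemma key_arith' {p q : ℕ} (n a m : ℕ) (hm : 1 ≤ m) (h3 : m ≤ p * a)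
    (h4 : a + q * (m - 1) = n + 1) :
    m * (p * q + 1) ≤ p * (n + q + 1) := by
  obtain ⟨k, rfl⟩ : ∃ k, m = k + 1 := ⟨m - 1, by omega⟩
  simp only [Nat.add_sub_cancel] at h4 ⊢
  have e : n + q + 1 = a + q * k + q := by omega
  have e1 : p * (n + q + 1) = p * a + p * (q * k) + p * q := by rw [e]; ring
  have e2 : (k + 1) * (p * q + 1) = p * (q * k) + p * q + (k + 1) := by ring
  linarith

lemma Pset_succ_card (p q : ℕ) (hp : 1 ≤ p) (hq : 1 ≤ q) (n : ℕ) :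
    (Pset p q (n + 1)).card = (Pset p q n).card + p * (n + q + 1) / (p * q + 1) := by
  have hk : 0 < p * q + 1 := Nat.succ_pos _
  set t := p * (n + q + 1) / (p * q + 1) with ht
  set D := (Finset.Icc 1 t).image (fun m => (n + 1 - q * (m - 1), m)) with hD
  have hinj : Function.Injective (fun m : ℕ => (n + 1 - q * (m - 1), m)) :=
    fun i j hij => congrArg Prod.snd hij
  have hDcard : D.card = t := by
    rw [hD, Finset.card_image_of_injective _ hinj, Nat.card_Icc, Nat.add_sub_cancel]
  have hDmem : ∀ a m : ℕ, (a, m) ∈ D ↔ 1 ≤ m ∧ m * (p * q + 1) ≤ p * (n + q + 1)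
      ∧ a = n + 1 - q * (m - 1) := by
    intro a m
    rw [hD]
    simp only [Finset.mem_image, Finset.mem_Icc, Prod.mk.injEq]
    constructor
    · rintro ⟨m', ⟨hm1, hm2⟩, ha, rfl⟩
      exact ⟨hm1, (Nat.le_div_iff_mul_le hk).mp hm2, ha.symm⟩
    · rintro ⟨hm1, hm2, rfl⟩
      exact ⟨m, ⟨hm1, (Nat.le_div_iff_mul_le hk).mpr hm2⟩, rfl, rfl⟩
  have hdisj : Disjoint (Pset p q n) D := by
    rw [Finset.disjoint_left]
    rintro ⟨a, m⟩ hP hDm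
    rw [mem_Pset hp] at hP
    obtain ⟨hm1, hm2, rfl⟩ := (hDmem a m).mp hDm
    obtain ⟨hqk, _⟩ := key_arith hp hq n m hm1 hm2
    simp only at hP
    omega
  have hunion : Pset p q (n + 1) = Pset p q n ∪ D := by
    ext ⟨a, m⟩
    rw [Finset.mem_union, mem_Pset hp, mem_Pset hp, hDmem a m]
    simp only
    constructor
    · rintro ⟨h1, h2, h3, h4⟩
      rcases Nat.lt_or_ge (a + q * (m - 1)) (n + 1) with h | h
      · left; exact ⟨h1, h2, h3, by omega⟩
      · right
        have h4' : a + q * (m - 1) = n + 1 := by omega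
        exact ⟨h2, key_arith' n a m h2 h3 h4', by omega⟩
    · rintro (⟨h1, h2, h3, h4⟩ | ⟨hm1, hm2, rfl⟩)
      · exact ⟨h1, h2, h3, by omega⟩
      · obtain ⟨hqk, hpa⟩ := key_arith hp hq n m hm1 hm2
        exact ⟨by omega, hm1, hpa, by omega⟩
  rw [hunion, Finset.card_union_of_disjoint hdisj, hDcard]

lemma Pset_zero (p q : ℕ) : Pset p q 0 = ∅ := by
  ext ⟨a, m⟩
  simp [Pset]

lemma card_Pset (p q : ℕ) (hp : 1 ≤ p) (hq : 1 ≤ q) (N : ℕ) :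
    (Pset p q N).card = ∑ n ∈ Finset.range N, p * (n + q + 1) / (p * q + 1) := by
  induction N with
  | zero => simp [Pset_zero]
  | succ n ih => rw [Finset.sum_range_succ, ← ih, Pset_succ_card p q hp hq n]

theorem stmt_11 (p q : ℕ) (hp : 1 ≤ p) (hq : 1 ≤ q) :
    Sr 1 p q = 1 ∧
    ∀ N : ℕ, 1 ≤ N →
      Sr N p q = 1 + ∑ n ∈ Finset.Icc 1 (N - 1), p * (n + q + 1) / (p * q + 1) := by
  have hone : p * (0 + q + 1) / (p * q + 1) = 1 := by
    have hk : 0 < p * q + 1 := Nat.succ_pos _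
    have e1 : p * (0 + q + 1) = p * q + p := by ring
    have e2 : p * 1 ≤ p * q := Nat.mul_le_mul_left p hq
    have h1 : 1 ≤ p * (0 + q + 1) / (p * q + 1) := by
      rw [Nat.le_div_iff_mul_le hk, e1]; omega
    have h2 : p * (0 + q + 1) / (p * q + 1) < 2 := by
      rw [Nat.div_lt_iff_lt_mul hk, e1]; omega
    omega
  constructor
  · rw [Sr_eq_card p q hp hq, card_Pset p q hp hq, Finset.sum_range_one, hone]
  · intro N hN
    obtain ⟨M, rfl⟩ : ∃ M, N = M + 1 := ⟨N - 1, by omega⟩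
    rw [Sr_eq_card p q hp hq, card_Pset p q hp hq]
    have hr : Finset.range (M + 1) = insert 0 (Finset.Icc 1 M) := by
      ext x
      simp only [Finset.mem_range, Finset.mem_insert, Finset.mem_Icc]
      omega
    rw [hr, Finset.sum_insert (by simp), hone]
    simp
end
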